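/- For every δ > 0 and every η > 0 there exists ρ > 0 such that for all ε, τ, t with 0 < ε, 0 < τ ≤ t/2, t ≤ δ/2 and ε/τ < ρ, one has ∫_{B_δ \ B_τ(te₁)} U_{ε,te₁}(y)³·U_{ε,−te₁}(y) dy ≤ η·ε²/t²; that is, the contribution of the region B_δ \ B_τ(te₁) to the cubic cross term is o(ε²/t²) when ε ≪ τ ≪ t. -/

import Mathlib

noncomputable section

open MeasureTheory Real RealInnerProductSpace

/-- Euclidean four-space. -/
abbrev E4 : Type := EuclideanSpace ℝ (Fin 4)

/-- The normalizing constant `c₄ = (6/π²)^(1/4)`. -/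
def c4 : ℝ := (6 / Real.pi ^ 2) ^ ((1 : ℝ) / 4)

/-- The Sobolev constant `S₄ = 8/c₄²`. -/
def S4 : ℝ := 8 / c4 ^ 2

/-- The standard (normalized) bubble `U(x) = c₄ (1+|x|²)⁻¹`. -/
def Ubub (x : E4) : ℝ := c4 * (1 + ‖x‖ ^ 2)⁻¹

/-- The rescaled/translated bubble `U_{ε,x₀}(x) = ε⁻¹ U((x - x₀)/ε)`. -/
def Ueps (ε : ℝ) (x₀ : E4) (x : E4) : ℝ := ε⁻¹ * Ubub (ε⁻¹ • (x - x₀))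

/-- The double bubble `Û_{ε,x₀} = U_{ε,x₀} + U_{ε,-x₀}`. -/
def Uhat (ε : ℝ) (x₀ : E4) (x : E4) : ℝ := Ueps ε x₀ x + Ueps ε (-x₀) x

/-- The first standard basis vector of `ℝ⁴`. -/
def e1 : E4 := EuclideanSpace.single (0 : Fin 4) (1 : ℝ)

/-- The Yamabe (Sobolev) quotient `Q(u) = 6 ∫ |∇u|² / (∫ u⁴)^{1/2}` on `ℝ⁴`. -/
def Qyam (u : E4 → ℝ) : ℝ :=
  6 * (∫ x : E4, ‖gradient u x‖ ^ 2) / Real.sqrt (∫ x : E4, (u x) ^ 4)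

/-!
Since `‖y - te₁‖ + ‖y + te₁‖ ≥ 2t`, at every point one of the two bubbles is evaluated at
distance at least `t` from its centre. With `U_{ε,x₀}(y) ≤ c₄ ε ‖y - x₀‖⁻²`, the integrand is
at most `c₄⁴ε⁴ t⁻² ‖y - te₁‖⁻⁶` off `B_t(-te₁)`, which integrates over `‖y - te₁‖ ≥ τ` to
`O(ε⁴/(τ²t²))`, and at most `c₄⁴ε⁴ t⁻⁶ ‖y + te₁‖⁻²` on `B_t(-te₁)`, which integrates to
`O(ε⁴/t⁴)`. Since `τ ≤ t`, both are `O((ε/τ)² ε²/t²)`.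
-/

open Set Metric

section SeminormedAddCommGroup

variable {E : Type*} [SeminormedAddCommGroup E]

lemma ball_eq_preimage_norm_sub (p : E) (r : ℝ) : ball p r = (‖· - p‖) ⁻¹' Iio r := by
  ext x; simp [dist_eq_norm]

lemma compl_ball_eq_preimage_norm_sub (p : E) (r : ℝ) : (ball p r)ᶜ = (‖· - p‖) ⁻¹' Ici r := by
  ext x; simp [dist_eq_norm]

lemma indicator_preimage_norm_sub (f : ℝ → ℝ) (T : Set ℝ) (p : E) :
    ((‖· - p‖) ⁻¹' T).indicator (fun x => f ‖x - p‖) = fun x => T.indicator f ‖x - p‖ :=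
  funext fun _ => indicator_comp_right (‖· - p‖)

end SeminormedAddCommGroup

lemma two_mul_norm_le_norm_sub_add_norm_sub_neg {E : Type*} [NormedAddCommGroup E]
    [NormedSpace ℝ E] (p y : E) : 2 * ‖p‖ ≤ ‖y - p‖ + ‖y - -p‖ :=
  calc 2 * ‖p‖ = ‖(y - -p) - (y - p)‖ := by
        rw [sub_sub_sub_cancel_left, sub_neg_eq_add, ← two_smul ℝ p, norm_smul]; norm_num
    _ ≤ ‖y - p‖ + ‖y - -p‖ := by rw [add_comm]; exact norm_sub_le _ _

section Radial

variable {E : Type*} [NormedAddCommGroup E] [NormedSpace ℝ E] [FiniteDimensional ℝ E]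
  [MeasurableSpace E] [BorelSpace E] [Nontrivial E] (μ : Measure E) [μ.IsAddHaarMeasure]

lemma setIntegral_preimage_norm_sub (f : ℝ → ℝ) {T : Set ℝ} (hT : MeasurableSet T) (p : E) :
    ∫ x in (‖· - p‖) ⁻¹' T, f ‖x - p‖ ∂μ = Module.finrank ℝ E * μ.real (ball 0 1) *
      ∫ y in Ioi 0 ∩ T, y ^ (Module.finrank ℝ E - 1) * f y := by
  have hm : MeasurableSet ((‖· - p‖) ⁻¹' T) := (measurable_id.sub_const p).norm hT
  rw [← integral_indicator hm, indicator_preimage_norm_sub,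
    integral_sub_right_eq_self (fun x => T.indicator f ‖x‖) p, integral_fun_norm_addHaar,
    ← setIntegral_indicator hT]
  simp only [nsmul_eq_mul, smul_eq_mul, mul_assoc]
  congr 3 with y
  by_cases hy : y ∈ T <;> simp [hy]

lemma integrableOn_preimage_norm_sub_iff (f : ℝ → ℝ) {T : Set ℝ} (hT : MeasurableSet T)
    (p : E) : IntegrableOn (fun x => f ‖x - p‖) ((‖· - p‖) ⁻¹' T) μ ↔
      IntegrableOn (fun y => y ^ (Module.finrank ℝ E - 1) * f y) (Ioi 0 ∩ T) := by
  have hm : MeasurableSet ((‖· - p‖) ⁻¹' T) := (measurable_id.sub_const p).norm hT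
  have htr : Integrable (fun x => T.indicator f ‖x - p‖) μ ↔
      Integrable (fun x => T.indicator f ‖x‖) μ :=
    ⟨fun h => by simpa using h.comp_sub_right (-p), fun h => h.comp_sub_right p⟩
  rw [← integrable_indicator_iff hm, inter_comm, ← integrableOn_indicator_iff hT,
    indicator_preimage_norm_sub, htr, integrable_fun_norm_addHaar]
  exact integrableOn_congr_fun (fun y _ => (indicator_mul_right T (· ^ _) f).symm) measurableSet_Ioi

lemma pow_pred_mul_rpow_neg {y : ℝ} (hy : 0 < y) {n : ℕ} (hn : 1 ≤ n) (s : ℝ) :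
    y ^ (n - 1) * y ^ (-s) = y ^ ((n : ℝ) - 1 - s) := by
  rw [← Real.rpow_natCast, Nat.cast_sub hn, ← Real.rpow_add hy]
  ring_nf

lemma setIntegral_preimage_norm_sub_rpow_neg {T : Set ℝ} (hT : MeasurableSet T) (p : E) (s : ℝ) :
    ∫ x in (‖· - p‖) ⁻¹' T, ‖x - p‖ ^ (-s) ∂μ = Module.finrank ℝ E * μ.real (ball 0 1) *
      ∫ y in Ioi 0 ∩ T, y ^ ((Module.finrank ℝ E : ℝ) - 1 - s) := by
  rw [setIntegral_preimage_norm_sub μ (· ^ (-s)) hT]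
  congr 1
  exact setIntegral_congr_fun (measurableSet_Ioi.inter hT)
    fun y hy => pow_pred_mul_rpow_neg hy.1 Module.finrank_pos s

lemma integrableOn_preimage_norm_sub_rpow_neg_iff {T : Set ℝ} (hT : MeasurableSet T) (p : E)
    (s : ℝ) : IntegrableOn (fun x => ‖x - p‖ ^ (-s)) ((‖· - p‖) ⁻¹' T) μ ↔
      IntegrableOn (fun y : ℝ => y ^ ((Module.finrank ℝ E : ℝ) - 1 - s)) (Ioi 0 ∩ T) := by
  rw [integrableOn_preimage_norm_sub_iff μ (· ^ (-s)) hT]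
  exact integrableOn_congr_fun (fun y hy => pow_pred_mul_rpow_neg hy.1 Module.finrank_pos s)
    (measurableSet_Ioi.inter hT)

lemma integrableOn_ball_norm_sub_rpow_neg (p : E) (r : ℝ) {s : ℝ}
    (hs : s < Module.finrank ℝ E) : IntegrableOn (fun x => ‖x - p‖ ^ (-s)) (ball p r) μ := by
  rw [ball_eq_preimage_norm_sub, integrableOn_preimage_norm_sub_rpow_neg_iff μ measurableSet_Iio,
    Ioi_inter_Iio]
  rcases lt_or_ge 0 r with hr | hr
  · exact (intervalIntegral.integrableOn_Ioo_rpow_iff hr).2 (by linarith)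
  · simp [Ioo_eq_empty_of_le hr]

lemma setIntegral_ball_norm_sub_rpow_neg (p : E) {r s : ℝ} (hr : 0 < r)
    (hs : s < Module.finrank ℝ E) : ∫ x in ball p r, ‖x - p‖ ^ (-s) ∂μ =
      Module.finrank ℝ E * μ.real (ball 0 1) * (r ^ ((Module.finrank ℝ E : ℝ) - s) /
        ((Module.finrank ℝ E : ℝ) - s)) := by
  rw [ball_eq_preimage_norm_sub, setIntegral_preimage_norm_sub_rpow_neg μ measurableSet_Iio,
    Ioi_inter_Iio, ← integral_Ioc_eq_integral_Ioo, ← intervalIntegral.integral_of_le hr.le,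
    integral_rpow (Or.inl (by linarith)), Real.zero_rpow (by linarith)]
  ring_nf

lemma integrableOn_compl_ball_norm_sub_rpow_neg (p : E) {r s : ℝ} (hr : 0 < r)
    (hs : Module.finrank ℝ E < s) : IntegrableOn (fun x => ‖x - p‖ ^ (-s)) (ball p r)ᶜ μ := by
  rw [compl_ball_eq_preimage_norm_sub,
    integrableOn_preimage_norm_sub_rpow_neg_iff μ measurableSet_Ici,
    inter_eq_right.2 (Ici_subset_Ioi.2 hr), integrableOn_Ici_iff_integrableOn_Ioi]
  exact integrableOn_Ioi_rpow_of_lt (by linarith) hr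

lemma setIntegral_compl_ball_norm_sub_rpow_neg (p : E) {r s : ℝ} (hr : 0 < r)
    (hs : Module.finrank ℝ E < s) : ∫ x in (ball p r)ᶜ, ‖x - p‖ ^ (-s) ∂μ =
      Module.finrank ℝ E * μ.real (ball 0 1) * (r ^ ((Module.finrank ℝ E : ℝ) - s) /
        (s - Module.finrank ℝ E)) := by
  rw [compl_ball_eq_preimage_norm_sub, setIntegral_preimage_norm_sub_rpow_neg μ measurableSet_Ici,
    inter_eq_right.2 (Ici_subset_Ioi.2 hr), integral_Ici_eq_integral_Ioi,
    integral_Ioi_rpow_of_lt (by linarith) hr]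
  rw [show (Module.finrank ℝ E : ℝ) - 1 - s + 1 = Module.finrank ℝ E - s by ring, neg_div,
    ← div_neg, neg_sub]

end Radial

lemma setIntegral_le_setIntegral_of_subset {α : Type*} [MeasurableSpace α] {μ : Measure α}
    {f g : α → ℝ} {s t : Set α} (hs : MeasurableSet s) (ht : MeasurableSet t) (hst : s ⊆ t)
    (hf : ∀ x ∈ s, 0 ≤ f x)
    (hg : IntegrableOn g t μ) (hg0 : ∀ x ∈ t, 0 ≤ g x) (hfg : ∀ᵐ x ∂μ, x ∈ s → f x ≤ g x) :
    ∫ x in s, f x ∂μ ≤ ∫ x in t, g x ∂μ :=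
  calc ∫ x in s, f x ∂μ ≤ ∫ x in s, g x ∂μ :=
        integral_mono_of_nonneg (ae_restrict_of_forall_mem hs hf) (hg.mono_set hst)
          ((ae_restrict_iff' hs).2 hfg)
    _ ≤ ∫ x in t, g x ∂μ :=
        setIntegral_mono_set hg (ae_restrict_of_forall_mem ht hg0) hst.eventuallyLE

lemma c4_pos : 0 < c4 := Real.rpow_pos_of_pos (by positivity) _

lemma Ueps_eq {ε : ℝ} (hε : 0 < ε) (x₀ y : E4) :
    Ueps ε x₀ y = c4 * ε * (ε ^ 2 + ‖y - x₀‖ ^ 2)⁻¹ := by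
  rw [Ueps, Ubub, norm_smul, Real.norm_eq_abs, abs_of_pos (inv_pos.2 hε)]
  field_simp

lemma Ueps_nonneg {ε : ℝ} (hε : 0 < ε) (x₀ y : E4) : 0 ≤ Ueps ε x₀ y := by
  rw [Ueps_eq hε]; have := c4_pos; positivity

lemma continuous_Ueps (ε : ℝ) (x₀ : E4) : Continuous (Ueps ε x₀) := by
  unfold Ueps Ubub
  fun_prop (disch := intro; positivity)

lemma Ueps_le_rpow {ε : ℝ} (hε : 0 < ε) {x₀ y : E4} (hy : y ≠ x₀) :
    Ueps ε x₀ y ≤ c4 * ε * ‖y - x₀‖ ^ (-2 : ℝ) := by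
  have hpos : 0 < ‖y - x₀‖ := norm_pos_iff.2 (sub_ne_zero.2 hy)
  rw [Ueps_eq hε, Real.rpow_neg hpos.le, Real.rpow_two]
  have := c4_pos
  gcongr
  linarith [sq_nonneg ε]

lemma Ueps_cube_mul_Ueps_le {ε : ℝ} (hε : 0 < ε) {p y : E4} (hyp : y ≠ p) (hyq : y ≠ -p) :
    Ueps ε p y ^ 3 * Ueps ε (-p) y ≤
      (c4 * ε) ^ 4 * ‖y - p‖ ^ (-6 : ℝ) * ‖y - -p‖ ^ (-2 : ℝ) := by
  have h6 : ‖y - p‖ ^ (-6 : ℝ) = (‖y - p‖ ^ (-2 : ℝ)) ^ 3 := by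
    rw [← Real.rpow_mul_natCast (norm_nonneg _)]; norm_num
  rw [h6]
  calc Ueps ε p y ^ 3 * Ueps ε (-p) y
      ≤ (c4 * ε * ‖y - p‖ ^ (-2 : ℝ)) ^ 3 * (c4 * ε * ‖y - -p‖ ^ (-2 : ℝ))  :=
        mul_le_mul (pow_le_pow_left₀ (Ueps_nonneg hε _ _) (Ueps_le_rpow hε hyp) 3)
          (Ueps_le_rpow hε hyq) (Ueps_nonneg hε _ _) (by have := c4_pos; positivity)
    _ = _ := by ring

lemma setIntegral_compl_ball_norm_sub_rpow_neg_six (p : E4) {τ : ℝ} (hτ : 0 < τ) :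
    ∫ y in (ball p τ)ᶜ, ‖y - p‖ ^ (-6 : ℝ) = 2 * volume.real (ball (0 : E4) 1) * (τ ^ 2)⁻¹ := by
  rw [setIntegral_compl_ball_norm_sub_rpow_neg volume p hτ (by simp; norm_num),
    finrank_euclideanSpace_fin]
  norm_num [Real.rpow_neg_ofNat]
  ring

lemma setIntegral_ball_norm_sub_rpow_neg_two (p : E4) {t : ℝ} (ht : 0 < t) :
    ∫ y in ball p t, ‖y - p‖ ^ (-2 : ℝ) = 2 * volume.real (ball (0 : E4) 1) * t ^ 2 := by
  rw [setIntegral_ball_norm_sub_rpow_neg volume p ht (by simp; norm_num),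
    finrank_euclideanSpace_fin]
  norm_num
  ring

lemma Ueps_cube_mul_Ueps_nonneg {ε : ℝ} (hε : 0 < ε) (p y : E4) :
    0 ≤ Ueps ε p y ^ 3 * Ueps ε (-p) y :=
  mul_nonneg (pow_nonneg (Ueps_nonneg hε p y) 3) (Ueps_nonneg hε (-p) y)

lemma setIntegral_Ueps_cube_mul_Ueps_le_of_subset_ball {ε t : ℝ} (hε : 0 < ε) (ht : 0 < t)
    {p : E4} (hp : ‖p‖ = t) {S : Set E4} (hS : MeasurableSet S) (hSp : S ⊆ ball (-p) t) :
    ∫ y in S, Ueps ε p y ^ 3 * Ueps ε (-p) y ≤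
      (c4 * ε) ^ 4 * (t ^ 6)⁻¹ * (2 * volume.real (ball (0 : E4) 1) * t ^ 2) := by
  have := c4_pos
  rw [← setIntegral_ball_norm_sub_rpow_neg_two (-p) ht, ← integral_const_mul]
  refine setIntegral_le_setIntegral_of_subset hS measurableSet_ball hSp
    (fun y _ => Ueps_cube_mul_Ueps_nonneg hε p y)
    ((integrableOn_ball_norm_sub_rpow_neg volume (-p) t (by simp; norm_num)).const_mul _)
    (fun y _ => by positivity) ?_
  -- `‖y - -p‖ ^ (-2 : ℝ)` is the junk value `0` at `y = -p`, so the bound holds only a.e.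
  filter_upwards [Measure.ae_ne volume (-p)] with y hyq hyS
  have hyS : ‖y - -p‖ < t := by simpa [dist_eq_norm] using hSp hyS
  have htp : t ≤ ‖y - p‖ := by linarith [two_mul_norm_le_norm_sub_add_norm_sub_neg p y]
  have hyp : y ≠ p := fun h => by subst h; simp at htp; linarith
  calc Ueps ε p y ^ 3 * Ueps ε (-p) y
      ≤ (c4 * ε) ^ 4 * ‖y - p‖ ^ (-6 : ℝ) * ‖y - -p‖ ^ (-2 : ℝ) :=
        Ueps_cube_mul_Ueps_le hε hyp hyq
    _ ≤ (c4 * ε) ^ 4 * t ^ (-6 : ℝ) * ‖y - -p‖ ^ (-2 : ℝ) := by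
        gcongr _ * ?_ * _
        exact Real.rpow_le_rpow_of_nonpos ht htp (by norm_num)
    _ = _ := by rw [Real.rpow_neg_ofNat]; norm_num

lemma setIntegral_Ueps_cube_mul_Ueps_le_of_subset_compl_ball {ε τ t : ℝ} (hε : 0 < ε)
    (hτ : 0 < τ) (ht : 0 < t) {p : E4} {S : Set E4} (hS : MeasurableSet S)
    (hSp : S ⊆ (ball p τ)ᶜ) (hSq : S ⊆ (ball (-p) t)ᶜ) :
    ∫ y in S, Ueps ε p y ^ 3 * Ueps ε (-p) y ≤
      (c4 * ε) ^ 4 * (t ^ 2)⁻¹ * (2 * volume.real (ball (0 : E4) 1) * (τ ^ 2)⁻¹) := by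
  have := c4_pos
  rw [← setIntegral_compl_ball_norm_sub_rpow_neg_six p hτ, ← integral_const_mul]
  refine setIntegral_le_setIntegral_of_subset hS measurableSet_ball.compl hSp
    (fun y _ => Ueps_cube_mul_Ueps_nonneg hε p y)
    ((integrableOn_compl_ball_norm_sub_rpow_neg volume p hτ (by simp; norm_num)).const_mul _)
    (fun y _ => by positivity) (Filter.Eventually.of_forall fun y hyS => ?_)
  have hτy : τ ≤ ‖y - p‖ := by simpa [dist_eq_norm] using hSp hyS
  have hty : t ≤ ‖y - -p‖ := by simpa [dist_eq_norm] using hSq hyS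
  have hyp : y ≠ p := fun h => by subst h; simp at hτy; linarith
  have hyq : y ≠ -p := fun h => by subst h; simp at hty; linarith
  calc Ueps ε p y ^ 3 * Ueps ε (-p) y
      ≤ (c4 * ε) ^ 4 * ‖y - p‖ ^ (-6 : ℝ) * ‖y - -p‖ ^ (-2 : ℝ) :=
        Ueps_cube_mul_Ueps_le hε hyp hyq
    _ ≤ (c4 * ε) ^ 4 * ‖y - p‖ ^ (-6 : ℝ) * t ^ (-2 : ℝ) := by
        gcongr _ * ?_
        exact Real.rpow_le_rpow_of_nonpos ht hty (by norm_num)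
    _ = _ := by rw [Real.rpow_neg_ofNat]; norm_num; ring

lemma setIntegral_Ueps_cube_mul_Ueps_le {ε τ t : ℝ} (hε : 0 < ε) (hτ : 0 < τ) (ht : 0 < t)
    {p : E4} (hp : ‖p‖ = t) {S : Set E4} (hS : MeasurableSet S) (hSb : Bornology.IsBounded S)
    (hSp : S ⊆ (ball p τ)ᶜ) :
    ∫ y in S, Ueps ε p y ^ 3 * Ueps ε (-p) y ≤
      2 * volume.real (ball (0 : E4) 1) * (c4 * ε) ^ 4 * ((τ ^ 2 * t ^ 2)⁻¹ + (t ^ 4)⁻¹) := by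
  have hB : MeasurableSet (ball (-p) t) := measurableSet_ball
  have hint : IntegrableOn (fun y => Ueps ε p y ^ 3 * Ueps ε (-p) y) S :=
    (((continuous_Ueps ε p).pow 3).mul (continuous_Ueps ε (-p))).continuousOn.integrableOn_compact
      hSb.isCompact_closure |>.mono_set subset_closure
  rw [← integral_inter_add_sdiff hB hint]
  calc _ ≤ (c4 * ε) ^ 4 * (t ^ 6)⁻¹ * (2 * volume.real (ball (0 : E4) 1) * t ^ 2) +
        (c4 * ε) ^ 4 * (t ^ 2)⁻¹ * (2 * volume.real (ball (0 : E4) 1) * (τ ^ 2)⁻¹) :=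
        add_le_add
          (setIntegral_Ueps_cube_mul_Ueps_le_of_subset_ball hε ht hp (hS.inter hB)
            inter_subset_right)
          (setIntegral_Ueps_cube_mul_Ueps_le_of_subset_compl_ball hε hτ ht (hS.diff hB)
            (sdiff_subset.trans hSp) fun _ hy => hy.2)
    _ = _ := by field_simp; ring

theorem stmt18_general (δ η : ℝ) (hη : 0 < η) :
    ∃ ρ : ℝ, 0 < ρ ∧ ∀ ε τ t : ℝ, 0 < ε → 0 < τ → τ ≤ t / 2 → t ≤ δ / 2 → ε / τ < ρ →
      (∫ y in Metric.ball (0 : E4) δ \ Metric.ball (t • e1) τ,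
          Ueps ε (t • e1) y ^ 3 * Ueps ε (-(t • e1)) y)
        ≤ η * ε ^ 2 / t ^ 2 := by
  set V := volume.real (ball (0 : E4) 1)
  have hC : 0 < 4 * V * c4 ^ 4 := by
    have : 0 < V :=
      ENNReal.toReal_pos (measure_ball_pos volume _ one_pos).ne' measure_ball_lt_top.ne
    have := c4_pos
    positivity
  refine ⟨√(η / (4 * V * c4 ^ 4)), by positivity, fun ε τ t hε hτ hτt htδ hρ => ?_⟩
  have ht : 0 < t := by linarith
  have hp : ‖t • e1‖ = t := by simp [e1, norm_smul, ht.le]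
  have hsmall : 4 * V * c4 ^ 4 * (ε / τ) ^ 2 ≤ η := by
    have := pow_lt_pow_left₀ hρ (by positivity) two_ne_zero
    rw [Real.sq_sqrt (by positivity), lt_div_iff₀ hC] at this
    linarith
  have htτ : (t ^ 4)⁻¹ ≤ (τ ^ 2 * t ^ 2)⁻¹ := by
    rw [show t ^ 4 = t ^ 2 * t ^ 2 by ring]
    gcongr
    linarith
  calc _ ≤ 2 * V * (c4 * ε) ^ 4 * ((τ ^ 2 * t ^ 2)⁻¹ + (t ^ 4)⁻¹) :=
        setIntegral_Ueps_cube_mul_Ueps_le hε hτ ht hp (measurableSet_ball.diff measurableSet_ball)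
          (isBounded_ball.subset sdiff_subset) fun _ hy => hy.2
    _ ≤ 2 * V * (c4 * ε) ^ 4 * (2 * (τ ^ 2 * t ^ 2)⁻¹) := by gcongr; linarith
    _ = 4 * V * c4 ^ 4 * (ε / τ) ^ 2 * (ε ^ 2 / t ^ 2) := by field_simp; ring
    _ ≤ η * ε ^ 2 / t ^ 2 := by rw [mul_div_assoc]; gcongr

/-- The contribution of `B_δ \\ B_τ(te₁)` to the cubic cross term is `o(ε²/t²)`
when `ε ≪ τ ≤ t/2 ≤ δ/4`. -/
theorem stmt18 (δ η : ℝ) (hδ : 0 < δ) (hη : 0 < η) :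
    ∃ ρ : ℝ, 0 < ρ ∧ ∀ ε τ t : ℝ, 0 < ε → 0 < τ → τ ≤ t / 2 → t ≤ δ / 2 → ε / τ < ρ →
      (∫ y in Metric.ball (0 : E4) δ \ Metric.ball (t • e1) τ,
          Ueps ε (t • e1) y ^ 3 * Ueps ε (-(t • e1)) y)
        ≤ η * ε ^ 2 / t ^ 2 :=
  stmt18_general δ η hη
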